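/- Assume W : ℝ^d → ℝ ∪ {+∞} satisfies Hypotheses (H1), (H2) and (H3a). Then the following three conditions are equivalent: W is unstable; W is discretely unstable; W is H-unstable. -/

import Mathlib

open MeasureTheory Filter Topology
open scoped ENNReal NNReal

/-- The nonnegative part of an extended real, as a value in `ℝ≥0∞`. -/
noncomputable def erealToENNReal (a : EReal) : ℝ≥0∞ :=
  if a = ⊤ then ⊤ else ENNReal.ofReal a.toReal

noncomputable section

/-- Euclidean space ℝ^d. -/
abbrev Euc (d : ℕ) : Type := EuclideanSpace ℝ (Fin d)

/-- Signed integral of an `EReal`-valued function (positive part minus negative part). -/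
noncomputable def eintegral {α : Type*} [MeasurableSpace α] (μ : Measure α) (f : α → EReal) :
    EReal :=
  ((∫⁻ x, erealToENNReal (f x) ∂μ : ℝ≥0∞) : EReal) -
    ((∫⁻ x, erealToENNReal (-f x) ∂μ : ℝ≥0∞) : EReal)

/-- Continuum interaction energy `E(ρ) = (1/2) ∬ W(x−y) dρ(x) dρ(y)`. -/
noncomputable def contEnergy {d : ℕ} (W : Euc d → EReal) (ρ : Measure (Euc d)) : EReal :=
  (((1 : ℝ) / 2 : ℝ) : EReal) * eintegral (ρ.prod ρ) fun p => W (p.1 - p.2)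

/-- Discrete interaction energy `E_N(X) = (1/(2N²)) Σ_{i≠j} W(x_i − x_j)`. -/
noncomputable def discEnergy {d : ℕ} (W : Euc d → EReal) (N : ℕ) (X : Fin N → Euc d) : EReal :=
  (((1 : ℝ) / (2 * (N : ℝ) ^ 2) : ℝ) : EReal) *
    ∑ i : Fin N, ∑ j ∈ Finset.univ.erase i, W (X i - X j)

/-- `P_i(X) = (1/N) Σ_{j≠i} W(x_i − x_j)`, the potential felt by particle `i`. -/
noncomputable def particlePotential {d : ℕ} (W : Euc d → EReal) (N : ℕ) (X : Fin N → Euc d)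
    (i : Fin N) : EReal :=
  (((N : ℝ)⁻¹ : ℝ) : EReal) * ∑ j ∈ Finset.univ.erase i, W (X i - X j)

/-- Empirical measure `μ_X = (1/N) Σ δ_{x_i}`. -/
noncomputable def empMeasure {d N : ℕ} (X : Fin N → Euc d) : Measure (Euc d) :=
  (N : ℝ≥0∞)⁻¹ • ∑ i : Fin N, Measure.dirac (X i)

/-- `X` is a global minimiser of the discrete energy `E_N`. -/
def IsDiscMinimiser {d : ℕ} (W : Euc d → EReal) (N : ℕ) (X : Fin N → Euc d) : Prop :=
  ∀ Y : Fin N → Euc d, discEnergy W N X ≤ discEnergy W N Y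

/-- `ρ` is a Borel probability measure minimising the continuum energy over all
Borel probability measures. -/
def IsContMinimiser {d : ℕ} (W : Euc d → EReal) (ρ : Measure (Euc d)) : Prop :=
  IsProbabilityMeasure ρ ∧
    ∀ ν : Measure (Euc d), IsProbabilityMeasure ν → contEnergy W ρ ≤ contEnergy W ν

/-- Narrow convergence of a sequence of measures, in duality with bounded continuous
functions. -/
def NarrowTendsto {d : ℕ} (μ : ℕ → Measure (Euc d)) (ρ : Measure (Euc d)) : Prop :=
  ∀ f : BoundedContinuousFunction (Euc d) ℝ,
    Tendsto (fun N => ∫ x, f x ∂μ N) atTop (nhds (∫ x, f x ∂ρ))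

/-- Support of a measure. -/
def measSupport {d : ℕ} (ρ : Measure (Euc d)) : Set (Euc d) :=
  {x | ∀ r : ℝ, 0 < r → 0 < ρ (Metric.ball x r)}

/-- Average of `W` over the ball of radius `ε` centred at `x`. -/
noncomputable def ballAvg {d : ℕ} (W : Euc d → EReal) (x : Euc d) (ε : ℝ) : EReal :=
  (((volume (Metric.ball x ε)).toReal⁻¹ : ℝ) : EReal) *
    eintegral (volume.restrict (Metric.ball x ε)) W

/-- Generalised Laplacian `Δ⁰W(x) = liminf_{ε→0⁺} (2(d+2)/ε²)(⨍_{B_ε(x)} W − W(x))`. -/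
noncomputable def genLap {d : ℕ} (W : Euc d → EReal) (x : Euc d) : EReal :=
  Filter.liminf
    (fun ε : ℝ => (((2 * ((d : ℝ) + 2) / ε ^ 2) : ℝ) : EReal) * (ballAvg W x ε - W x))
    (nhdsWithin (0 : ℝ) (Set.Ioi 0))

/-- Local integrability of an `EReal`-valued function. -/
def ERealLocInt {d : ℕ} (W : Euc d → EReal) : Prop :=
  ∀ K : Set (Euc d), IsCompact K →
    (∫⁻ x in K, erealToENNReal (W x)) < ⊤ ∧ (∫⁻ x in K, erealToENNReal (-W x)) < ⊤

/-- `W` is β-repulsive at the origin. -/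
def BetaRepulsive {d : ℕ} (W : Euc d → EReal) (β : ℝ) : Prop :=
  ERealLocInt W ∧
    ∃ δ : ℝ, 0 < δ ∧ ∃ C : ℝ, 0 < C ∧
      (∀ x : Euc d, 0 < ‖x‖ → ‖x‖ < δ → ((C * ‖x‖ ^ (-β) : ℝ) : EReal) ≤ -genLap W x) ∧
      genLap W (0 : Euc d) = ⊥

/-- Hypothesis (H1): `W` is lower semicontinuous, bounded below by `Wmin` and locally
integrable. -/
def Hyp1 {d : ℕ} (W : Euc d → EReal) (Wmin : ℝ) : Prop :=
  LowerSemicontinuous W ∧ (∀ x, (Wmin : EReal) ≤ W x) ∧ ERealLocInt W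

/-- Hypothesis (H2): `W(x) → Winf` as `|x| → ∞`, `W` is symmetric, and `W` is radially
strictly increasing outside the ball of radius `RW > 0`. -/
def Hyp2 {d : ℕ} (W : Euc d → EReal) (Winf : EReal) (RW : ℝ) : Prop :=
  Tendsto W (cocompact (Euc d)) (nhds Winf) ∧ (∀ x, W (-x) = W x) ∧ 0 < RW ∧
    ∀ e : Euc d, ‖e‖ = 1 → ∀ r s : ℝ, RW ≤ r → r < s → W (r • e) < W (s • e)

/-- Hypothesis (H3a): `W` is bounded from above and upper semicontinuous. -/
def Hyp3a {d : ℕ} (W : Euc d → EReal) : Prop :=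
  (∃ C : ℝ, ∀ x, W x ≤ (C : EReal)) ∧ UpperSemicontinuous W

/-- Hypothesis (H3b): `W` is β-repulsive with `2 < β < d`, is `C¹` away from the origin,
and satisfies `Δ⁰W ≤ C_W`, `W(x) ≤ C_W|x|^{2−β}` and `|∇W(x)| ≤ C_W|x|^{1−β}` for `|x| ≤ 1`. -/
def Hyp3b {d : ℕ} (W : Euc d → EReal) (β C_W : ℝ) : Prop :=
  2 < β ∧ β < d ∧ 0 < C_W ∧ BetaRepulsive W β ∧
    (∃ g : Euc d → ℝ, (∀ x : Euc d, x ≠ 0 → W x = (g x : EReal)) ∧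
      ContDiffOn ℝ 1 g {(0 : Euc d)}ᶜ ∧
      ∀ x : Euc d, x ≠ 0 → ‖x‖ ≤ 1 → ‖fderiv ℝ g x‖ ≤ C_W * ‖x‖ ^ ((1 : ℝ) - β)) ∧
    (∀ x, genLap W x ≤ (C_W : EReal)) ∧
    ∀ x : Euc d, x ≠ 0 → ‖x‖ ≤ 1 → W x ≤ ((C_W * ‖x‖ ^ ((2 : ℝ) - β) : ℝ) : EReal)

/-- `W` is unstable: some probability measure has energy `< Winf/2`. -/
def Unstable {d : ℕ} (W : Euc d → EReal) (Winf : EReal) : Prop :=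
  ∃ ρ : Measure (Euc d), IsProbabilityMeasure ρ ∧
    contEnergy W ρ < (((1 : ℝ) / 2 : ℝ) : EReal) * Winf

/-- `W` is strictly stable: every probability measure has energy `> Winf/2`. -/
def StrictlyStable {d : ℕ} (W : Euc d → EReal) (Winf : EReal) : Prop :=
  ∀ ρ : Measure (Euc d), IsProbabilityMeasure ρ →
    (((1 : ℝ) / 2 : ℝ) : EReal) * Winf < contEnergy W ρ

/-- `W` is discretely unstable. -/
def DiscUnstable {d : ℕ} (W : Euc d → EReal) (Winf : EReal) : Prop :=
  ∃ s : ℝ, 0 < s ∧ ∃ Nbar : ℕ, 2 ≤ Nbar ∧ ∀ N : ℕ, Nbar < N →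
    ∃ X : Fin N → Euc d,
      discEnergy W N X < (((1 : ℝ) / 2 : ℝ) : EReal) * Winf - (s : EReal)

/-- `W` is H-unstable. -/
def HUnstable {d : ℕ} (W : Euc d → EReal) (Winf : EReal) : Prop :=
  ∀ B : ℝ, ∃ N : ℕ, 2 ≤ N ∧ ∃ X : Fin N → Euc d,
    discEnergy W N X < (((1 : ℝ) / 2 : ℝ) : EReal) * Winf - ((B / (2 * (N : ℝ)) : ℝ) : EReal)

/-- The Morrey exponent `d/q`, where `q` is the Hölder dual of `p`. -/
def morreyExp (d : ℕ) (p : ℝ≥0∞) : ℝ := (d : ℝ) * (1 - (p⁻¹).toReal)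

end

/-! Since `W` is bounded, it is `x ↦ (w x : EReal)` for a bounded measurable real `w`, and every
energy is a finite real number. Averaging the discrete energy over `N` independent samples of `ρ`
gives `(1 - 1/N) E(ρ)`, so some configuration does at least as well: a gap `E(ρ) < W_∞/2` becomes
a gap uniform in large `N`, and a uniform gap `s` beats `B/(2N)` once `N` is large. Conversely
the empirical measure of a configuration has energy `W(0)/(2N) + E_N(X)`, so H-instability with
`B = W(0)` produces an unstable measure. -/

open Finset ProbabilityTheory

lemma EReal.coe_finsetSum {ι : Type*} (s : Finset ι) (f : ι → ℝ) :
    ((∑ i ∈ s, f i : ℝ) : EReal) = ∑ i ∈ s, (f i : EReal) :=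
  map_sum (⟨⟨Real.toEReal, EReal.coe_zero⟩, EReal.coe_add⟩ : ℝ →+ EReal) f s

lemma eintegral_coe {α : Type*} [MeasurableSpace α] {μ : Measure α} {g : α → ℝ}
    (hg : Integrable g μ) :
    eintegral μ (fun x => (g x : EReal)) = ((∫ x, g x ∂μ : ℝ) : EReal) := by
  have erealToENNReal_coe (r : ℝ) : erealToENNReal r = ENNReal.ofReal r := by
    simp [erealToENNReal]
  rw [integral_eq_lintegral_pos_part_sub_lintegral_neg_part hg, eintegral]
  simp only [← EReal.coe_neg, erealToENNReal_coe]
  rw [EReal.coe_sub, EReal.coe_ennreal_toReal hg.lintegral_lt_top.ne,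
    EReal.coe_ennreal_toReal hg.fun_neg.lintegral_lt_top.ne]

lemma integrable_comp_of_norm_le {α β : Type*} [MeasurableSpace α] [MeasurableSpace β]
    {μ : Measure α} [IsFiniteMeasure μ] {w : β → ℝ} (hw : Measurable w) {M : ℝ}
    (hM : ∀ x, ‖w x‖ ≤ M) {f : α → β} (hf : Measurable f) :
    Integrable (fun a => w (f a)) μ :=
  .of_bound (hw.comp hf).aestronglyMeasurable M (ae_of_all _ fun a => hM (f a))

section Pairs

variable {ι Ω : Type*} [Fintype ι] [MeasurableSpace Ω] (μ : Measure Ω) [IsProbabilityMeasure μ]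

lemma measurePreserving_pi_pair {i j : ι} (hij : i ≠ j) :
    MeasurePreserving (fun X : ι → Ω => (X i, X j)) (Measure.pi fun _ => μ) (μ.prod μ) := by
  have hmeas : Measurable fun X : ι → Ω => (X i, X j) :=
    (measurable_pi_apply i).prodMk (measurable_pi_apply j)
  refine ⟨hmeas, ?_⟩
  have hindep : iIndepFun (fun i (X : ι → Ω) => X i) (Measure.pi fun _ => μ) :=
    iIndepFun_pi (X := fun _ => id) fun _ => aemeasurable_id
  rw [(hindep.indepFun hij).map_prod_eq_prod_map_map (measurable_pi_apply i).aemeasurable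
    (measurable_pi_apply j).aemeasurable, (measurePreserving_eval _ i).map_eq,
    (measurePreserving_eval _ j).map_eq]

variable {μ} {g : Ω × Ω → ℝ}

lemma integrable_comp_pi_pair (hg : Integrable g (μ.prod μ)) {i j : ι} (hij : i ≠ j) :
    Integrable (fun X : ι → Ω => g (X i, X j)) (Measure.pi fun _ => μ) :=
  ((measurePreserving_pi_pair μ hij).integrable_comp hg.aestronglyMeasurable).2 hg

lemma integral_comp_pi_pair (hg : Integrable g (μ.prod μ)) {i j : ι} (hij : i ≠ j) :
    ∫ X : ι → Ω, g (X i, X j) ∂(Measure.pi fun _ => μ) = ∫ p, g p ∂(μ.prod μ) := by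
  have hpair := measurePreserving_pi_pair μ hij
  rw [← hpair.map_eq, integral_map hpair.measurable.aemeasurable
    (hpair.map_eq ▸ hg.aestronglyMeasurable)]

variable [DecidableEq ι]

lemma integrable_pi_sum_offDiag (hg : Integrable g (μ.prod μ)) :
    Integrable (fun X : ι → Ω => ∑ i, ∑ j ∈ univ.erase i, g (X i, X j))
      (Measure.pi fun _ => μ) :=
  integrable_finsetSum _ fun _ _ =>
    integrable_finsetSum _ fun _ hj => integrable_comp_pi_pair hg (mem_erase.1 hj).1.symm

lemma integral_pi_sum_offDiag (hg : Integrable g (μ.prod μ)) :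
    ∫ X : ι → Ω, ∑ i, ∑ j ∈ univ.erase i, g (X i, X j) ∂(Measure.pi fun _ => μ) =
      Fintype.card ι * (Fintype.card ι - 1) * ∫ p, g p ∂(μ.prod μ) := by
  have hrow (i : ι) : ∫ X : ι → Ω, ∑ j ∈ univ.erase i, g (X i, X j) ∂(Measure.pi fun _ => μ) =
      (Fintype.card ι - 1) * ∫ p, g p ∂(μ.prod μ) := by
    rw [integral_finsetSum _ fun j hj => integrable_comp_pi_pair hg (mem_erase.1 hj).1.symm,
      sum_congr rfl fun j hj => integral_comp_pi_pair hg (mem_erase.1 hj).1.symm, sum_const,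
      nsmul_eq_mul, cast_card_erase_of_mem (mem_univ i), card_univ]
  rw [integral_finsetSum _ fun i _ => integrable_finsetSum _ fun j hj =>
      integrable_comp_pi_pair hg (mem_erase.1 hj).1.symm,
    sum_congr rfl fun i _ => hrow i, sum_const, nsmul_eq_mul, card_univ, mul_assoc]

lemma exists_sum_offDiag_le_integral (hg : Integrable g (μ.prod μ)) :
    ∃ X : ι → Ω, ∑ i, ∑ j ∈ univ.erase i, g (X i, X j) ≤
      Fintype.card ι * (Fintype.card ι - 1) * ∫ p, g p ∂(μ.prod μ) := by
  rw [← integral_pi_sum_offDiag hg]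
  exact exists_le_integral (integrable_pi_sum_offDiag hg)

end Pairs

lemma EReal.exists_eq_coe_of_mem_Icc {x : EReal} {a b : ℝ} (hx : x ∈ Set.Icc (a : EReal) b) :
    ∃ r : ℝ, x = r ∧ r ∈ Set.Icc a b := by
  have htop : x ≠ ⊤ := ne_top_of_le_ne_top (EReal.coe_ne_top b) hx.2
  have hbot : x ≠ ⊥ := ne_bot_of_le_ne_bot (EReal.coe_ne_bot a) hx.1
  refine ⟨x.toReal, (EReal.coe_toReal htop hbot).symm, ?_⟩
  rw [← EReal.coe_toReal htop hbot] at hx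
  exact ⟨EReal.coe_le_coe_iff.1 hx.1, EReal.coe_le_coe_iff.1 hx.2⟩

section Energies

variable {d N : ℕ}

instance isProbabilityMeasure_empMeasure [NeZero N] (X : Fin N → Euc d) :
    IsProbabilityMeasure (empMeasure X) := by
  constructor
  rw [empMeasure, Measure.smul_apply, Measure.finsetSum_apply]
  simp only [Measure.dirac_apply_of_mem (Set.mem_univ _), sum_const, card_univ,
    Fintype.card_fin, nsmul_eq_mul, mul_one, smul_eq_mul]
  exact ENNReal.inv_mul_cancel (Nat.cast_ne_zero.2 (NeZero.ne N)) (ENNReal.natCast_ne_top N)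

lemma integral_empMeasure (X : Fin N → Euc d) {f : Euc d → ℝ} (hf : Measurable f) :
    ∫ x, f x ∂(empMeasure X) = (N : ℝ)⁻¹ * ∑ i, f (X i) := by
  rw [empMeasure, integral_smul_measure,
    integral_finsetSum_measure (fun i _ =>
      ⟨hf.aestronglyMeasurable, by simp [HasFiniteIntegral, lintegral_dirac' _ hf.enorm]⟩)]
  simp only [integral_dirac' _ _ hf.stronglyMeasurable, smul_eq_mul]
  congr 1
  simp [ENNReal.toReal_inv]

variable {w : Euc d → ℝ}

lemma discEnergy_coe (X : Fin N → Euc d) :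
    discEnergy (fun x => (w x : EReal)) N X =
      ((1 / (2 * (N : ℝ) ^ 2) * ∑ i, ∑ j ∈ univ.erase i, w (X i - X j) : ℝ) : EReal) := by
  simp only [discEnergy, EReal.coe_mul, EReal.coe_finsetSum]

lemma contEnergy_coe {ρ : Measure (Euc d)}
    (hw : Integrable (fun p : Euc d × Euc d => w (p.1 - p.2)) (ρ.prod ρ)) :
    contEnergy (fun x => (w x : EReal)) ρ =
      ((1 / 2 * ∫ p, w (p.1 - p.2) ∂(ρ.prod ρ) : ℝ) : EReal) := by
  rw [contEnergy, eintegral_coe hw, EReal.coe_mul]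

lemma contEnergy_empMeasure (hw : Measurable w) {M : ℝ} (hM : ∀ x, ‖w x‖ ≤ M) [NeZero N]
    (X : Fin N → Euc d) :
    contEnergy (fun x => (w x : EReal)) (empMeasure X) =
      ((w 0 / (2 * N) : ℝ) : EReal) + discEnergy (fun x => (w x : EReal)) N X := by
  have hint : Integrable (fun p : Euc d × Euc d => w (p.1 - p.2))
      ((empMeasure X).prod (empMeasure X)) :=
    integrable_comp_of_norm_le hw hM (measurable_fst.sub measurable_snd)
  rw [contEnergy_coe hint, discEnergy_coe, ← EReal.coe_add, integral_prod _ hint]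
  have hinner (x : Euc d) : ∫ y, w (x - y) ∂(empMeasure X) = (N : ℝ)⁻¹ * ∑ j, w (x - X j) :=
    integral_empMeasure X (hw.comp (measurable_const.sub measurable_id))
  rw [integral_congr_ae (ae_of_all _ hinner), integral_const_mul,
    integral_empMeasure X (f := fun x => ∑ j, w (x - X j))
      (Finset.measurable_sum _ fun j _ => hw.comp (measurable_id.sub measurable_const))]
  have hdiag (i : Fin N) : ∑ j, w (X i - X j) = w 0 + ∑ j ∈ univ.erase i, w (X i - X j) := by
    rw [← add_sum_erase _ _ (mem_univ i), sub_self]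
  have hN : (N : ℝ) ≠ 0 := Nat.cast_ne_zero.2 (NeZero.ne N)
  simp only [hdiag, sum_add_distrib, sum_const, card_univ, Fintype.card_fin, nsmul_eq_mul]
  field_simp

end Energies

section Instability

variable {d : ℕ}

lemma discUnstable_of_eventually {W : Euc d → EReal} {Winf : EReal} {s : ℝ} (hs : 0 < s)
    (h : ∀ᶠ N in atTop, ∃ X : Fin N → Euc d,
      discEnergy W N X < (((1 : ℝ) / 2 : ℝ) : EReal) * Winf - (s : EReal)) :
    DiscUnstable W Winf := by
  obtain ⟨N₀, hN₀⟩ := eventually_atTop.1 h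
  exact ⟨s, hs, max 2 N₀, le_max_left _ _, fun N hN => hN₀ N (le_max_right _ _ |>.trans hN.le)⟩

lemma DiscUnstable.hUnstable {W : Euc d → EReal} {Winf : EReal} (h : DiscUnstable W Winf) :
    HUnstable W Winf := by
  obtain ⟨s, hs, Nbar, hNbar, hconf⟩ := h
  intro B
  have hsmall : ∀ᶠ N : ℕ in atTop, B / 2 / N < s :=
    (tendsto_const_div_atTop_nhds_zero_nat (B / 2)).eventually (gt_mem_nhds hs)
  obtain ⟨N, hNs, hN⟩ := (hsmall.and (eventually_gt_atTop Nbar)).exists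
  obtain ⟨X, hX⟩ := hconf N hN
  rw [div_div] at hNs
  exact ⟨N, by omega, X, hX.trans_le (EReal.sub_le_sub le_rfl (EReal.coe_le_coe_iff.2 hNs.le))⟩

variable {w : Euc d → ℝ} {M : ℝ}

lemma Unstable.discUnstable (hw : Measurable w) (hM : ∀ x, ‖w x‖ ≤ M) {winf : ℝ}
    (h : Unstable (fun x => (w x : EReal)) winf) :
    DiscUnstable (fun x => (w x : EReal)) winf := by
  obtain ⟨ρ, hρ, hE⟩ := h
  have hint : Integrable (fun p : Euc d × Euc d => w (p.1 - p.2)) (ρ.prod ρ) :=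
    integrable_comp_of_norm_le hw hM (measurable_fst.sub measurable_snd)
  set I := ∫ p, w (p.1 - p.2) ∂(ρ.prod ρ)
  rw [contEnergy_coe hint, ← EReal.coe_mul, EReal.coe_lt_coe_iff] at hE
  have hs : 0 < (winf - I) / 4 := by linarith
  refine discUnstable_of_eventually hs ?_
  have hsmall : ∀ᶠ N : ℕ in atTop, -I / 2 / N < (winf - I) / 4 :=
    (tendsto_const_div_atTop_nhds_zero_nat (-I / 2)).eventually (gt_mem_nhds hs)
  filter_upwards [hsmall, eventually_gt_atTop 0] with N hsmall hN
  obtain ⟨X, hX⟩ := exists_sum_offDiag_le_integral (ι := Fin N) hint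
  refine ⟨X, ?_⟩
  rw [discEnergy_coe, ← EReal.coe_mul, ← EReal.coe_sub, EReal.coe_lt_coe_iff]
  rw [Fintype.card_fin] at hX
  have hNpos : (0 : ℝ) < N := Nat.cast_pos.2 hN
  calc 1 / (2 * (N : ℝ) ^ 2) * ∑ i, ∑ j ∈ univ.erase i, w (X i - X j)
      ≤ 1 / (2 * (N : ℝ) ^ 2) * (N * (N - 1) * I) := by gcongr
    _ = I / 2 + -I / 2 / N := by field_simp; ring
    _ < 1 / 2 * winf - (winf - I) / 4 := by linarith

lemma HUnstable.unstable (hw : Measurable w) (hM : ∀ x, ‖w x‖ ≤ M) {Winf : EReal}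
    (h : HUnstable (fun x => (w x : EReal)) Winf) :
    Unstable (fun x => (w x : EReal)) Winf := by
  obtain ⟨N, hN, X, hX⟩ := h (w 0)
  have : NeZero N := ⟨by omega⟩
  refine ⟨empMeasure X, inferInstance, ?_⟩
  rw [contEnergy_empMeasure hw hM, add_comm]
  exact (EReal.lt_sub_iff_add_lt (.inl (EReal.coe_ne_bot _)) (.inl (EReal.coe_ne_top _))).1 hX

end Instability

/-- under (H1), (H2) and (H3a), instability, discrete instability and
H-instability are all equivalent. -/
theorem instability_equivalences_bounded_case
    {d : ℕ} (hd : 0 < d) (W : Euc d → EReal) (Wmin : ℝ) (Winf : EReal) (RW : ℝ)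
    (h1 : Hyp1 W Wmin) (h2 : Hyp2 W Winf RW) (h3a : Hyp3a W) :
    (Unstable W Winf ↔ DiscUnstable W Winf) ∧
    (DiscUnstable W Winf ↔ HUnstable W Winf) := by
  obtain ⟨hlsc, hmin, -⟩ := h1
  obtain ⟨⟨C, hC⟩, -⟩ := h3a
  have hW : ∀ x, W x ∈ Set.Icc (Wmin : EReal) C := fun x => ⟨hmin x, hC x⟩
  choose w hWw hw using fun x => EReal.exists_eq_coe_of_mem_Icc (hW x)
  obtain rfl : W = fun x => (w x : EReal) := funext hWw
  have hmeas : Measurable w := measurable_ereal_toReal.comp hlsc.measurable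
  have hM (x : Euc d) : ‖w x‖ ≤ max |Wmin| |C| := abs_le_max_abs_abs (hw x).1 (hw x).2
  have : Nonempty (Fin d) := Fin.pos_iff_nonempty.1 hd
  obtain ⟨winf, rfl, -⟩ := EReal.exists_eq_coe_of_mem_Icc
    (isClosed_Icc.mem_of_tendsto h2.1 (Eventually.of_forall hW))
  exact ⟨⟨fun h => h.discUnstable hmeas hM, fun h => h.hUnstable.unstable hmeas hM⟩,
    ⟨DiscUnstable.hUnstable, fun h => (h.unstable hmeas hM).discUnstable hmeas hM⟩⟩
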